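/- Let A be a commutative algebra, D ⊆ Der(A) a distribution (a Lie subalgebra which is also an A-submodule) and I a regular complete integral for D, meaning D ∩ Der_I(A)_0 = I·D. Then the Bott connection ∇_X(v) = [X̃, v], where X̃ ∈ D is any lift of X ∈ D/(I·D) and v ∈ V(I), is well-defined: if X̃₁, X̃₂ ∈ D satisfy ρ(X̃₁) = ρ(X̃₂) then [X̃₁, v] = [X̃₂, v] in V(I) for all v ∈ V(I). -/

import Mathlib

/-- `Γ(I)`: `K`-linear maps `A → A/I` that are derivations over the quotient map. -/
def IsGammaMap' {K A : Type*} [Field K] [CommRing A] [Algebra K A] (I : Ideal A)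
    (s : A →ₗ[K] A ⧸ I) : Prop :=
  ∀ a b : A, s (a * b) = s a * Ideal.Quotient.mk I b + Ideal.Quotient.mk I a * s b

/-!
`Z = X̃₁ - X̃₂` lies in `D` and maps `A` into `I`, so by regularity it is a sum of terms `k • U`
with `k ∈ I`, `U ∈ D`. In the Leibniz rule for `s (k * U x)` both terms vanish, since `k ∈ I` and
`U x ∈ I` for `x ∈ I`; hence `s ∘ Z` vanishes on `I`. The other half of the bracket,
`ρ(X̃ᵢ) ∘ s`, does not depend on `i` at all.
-/
namespace IsGammaMap'

variable {K A : Type*} [Field K] [CommRing A] [Algebra K A] {I : Ideal A}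
  {s : A →ₗ[K] A ⧸ I}

theorem map_mul_eq_zero (hs : IsGammaMap' I s) {k b : A} (hk : k ∈ I) (hb : b ∈ I) :
    s (k * b) = 0 := by
  rw [hs, Ideal.Quotient.eq_zero_iff_mem.2 hk, Ideal.Quotient.eq_zero_iff_mem.2 hb]
  ring

theorem map_apply_eq_zero_of_mem_closure (hs : IsGammaMap' I s) {D : Set (Derivation K A A)}
    (hint : ∀ X ∈ D, ∀ a ∈ I, X a ∈ I) {Y : Derivation K A A}
    (hY : Y ∈ AddSubmonoid.closure {Y : Derivation K A A | ∃ k ∈ I, ∃ U ∈ D, Y = k • U})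
    {x : A} (hx : x ∈ I) : s (Y x) = 0 := by
  induction hY using AddSubmonoid.closure_induction with
  | mem Y hY =>
    obtain ⟨k, hk, U, hU, rfl⟩ := hY
    exact hs.map_mul_eq_zero hk (hint U hU x hx)
  | zero => simp
  | add Y₁ Y₂ _ _ ih₁ ih₂ => simp [ih₁, ih₂]

end IsGammaMap'

theorem stmt2_general (K : Type*) [Field K] (A : Type*) [CommRing A] [Algebra K A] (I : Ideal A)
    (D : Set (Derivation K A A))
    -- `D` is a Lie subalgebra and an `A`-submodule of `Der(A)`
    (hadd : ∀ X ∈ D, ∀ Y ∈ D, X + Y ∈ D)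
    (hsmul : ∀ a : A, ∀ X ∈ D, a • X ∈ D)
    -- `I` is an integral for `D`
    (hint : ∀ X ∈ D, ∀ a ∈ I, X a ∈ I)
    -- regularity: `D₀ = D ∩ Der_I(A)₀ ⊆ I·D`
    (hreg : ∀ X ∈ D, (∀ a : A, X a ∈ I) →
      X ∈ AddSubmonoid.closure {Y : Derivation K A A | ∃ k ∈ I, ∃ U ∈ D, Y = k • U}) :
    ∀ X₁ ∈ D, ∀ X₂ ∈ D,
      -- `ρ(X̃₁) = ρ(X̃₂)`
      (∀ a : A, X₁ a - X₂ a ∈ I) →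
      ∀ s : A →ₗ[K] A ⧸ I, IsGammaMap' I s →
      ∀ ρ₁ ρ₂ : (A ⧸ I) →ₗ[K] A ⧸ I,
        (∀ a : A, ρ₁ (Ideal.Quotient.mk I a) = Ideal.Quotient.mk I (X₁ a)) →
        (∀ a : A, ρ₂ (Ideal.Quotient.mk I a) = Ideal.Quotient.mk I (X₂ a)) →
      ∀ x ∈ I, (ρ₁ (s x) - s (X₁ x)) - (ρ₂ (s x) - s (X₂ x)) = 0 := by
  intro X₁ hX₁ X₂ hX₂ hρ s hs ρ₁ ρ₂ h₁ h₂ x hx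
  have hZD : X₁ - X₂ ∈ D := by
    simpa [sub_eq_add_neg] using hadd X₁ hX₁ _ (hsmul (-1) X₂ hX₂)
  have hZ : s (X₁ x) - s (X₂ x) = 0 := by
    simpa using hs.map_apply_eq_zero_of_mem_closure hint (hreg _ hZD (by simpa using hρ)) hx
  have hρ_eq : ρ₁ (s x) = ρ₂ (s x) := by
    obtain ⟨a, ha⟩ := Ideal.Quotient.mk_surjective (s x)
    rw [← ha, h₁, h₂, Ideal.Quotient.eq]
    exact hρ a
  rw [hρ_eq]
  linear_combination -hZ

/-- Let `D ⊆ Der(A)` be a distribution (a Lie subalgebra which is also an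
`A`-submodule) and `I` a regular complete integral for `D`, i.e. `I` is an integral
(`D ⊆ Der_I(A)`) and `D ∩ Der_I(A)₀ = I·D`.  Then the Bott connection `∇_X(v) = [X̃, v]`
is well defined: if `X̃₁, X̃₂ ∈ D` satisfy `ρ(X̃₁) = ρ(X̃₂)` then `[X̃₁, v] = [X̃₂, v]` in
`V(I) = Γ(I)/Γ(I)₀` for every `v ∈ V(I)` (two elements of `Γ(I)` have the same class in
`V(I)` iff they agree on `I`). -/
theorem stmt2 (K : Type*) [Field K] (A : Type*) [CommRing A] [Algebra K A] (I : Ideal A)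
    (D : Set (Derivation K A A))
    -- `D` is a Lie subalgebra and an `A`-submodule of `Der(A)`
    (hbr : ∀ X ∈ D, ∀ Y ∈ D, ⁅X, Y⁆ ∈ D)
    (hadd : ∀ X ∈ D, ∀ Y ∈ D, X + Y ∈ D)
    (hsmul : ∀ a : A, ∀ X ∈ D, a • X ∈ D)
    -- `I` is an integral for `D`
    (hint : ∀ X ∈ D, ∀ a ∈ I, X a ∈ I)
    -- regularity: `D₀ = D ∩ Der_I(A)₀ ⊆ I·D`
    (hreg : ∀ X ∈ D, (∀ a : A, X a ∈ I) →
      X ∈ AddSubmonoid.closure {Y : Derivation K A A | ∃ k ∈ I, ∃ U ∈ D, Y = k • U}) :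
    ∀ X₁ ∈ D, ∀ X₂ ∈ D,
      -- `ρ(X̃₁) = ρ(X̃₂)`
      (∀ a : A, X₁ a - X₂ a ∈ I) →
      ∀ s : A →ₗ[K] A ⧸ I, IsGammaMap' I s →
      ∀ ρ₁ ρ₂ : (A ⧸ I) →ₗ[K] A ⧸ I,
        (∀ a : A, ρ₁ (Ideal.Quotient.mk I a) = Ideal.Quotient.mk I (X₁ a)) →
        (∀ a : A, ρ₂ (Ideal.Quotient.mk I a) = Ideal.Quotient.mk I (X₂ a)) →
      ∀ x ∈ I, (ρ₁ (s x) - s (X₁ x)) - (ρ₂ (s x) - s (X₂ x)) = 0 :=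
  stmt2_general K A I D hadd hsmul hint hreg
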